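/- Let A ∈ ℤ^{m×n} with 1 ≤ m < n satisfy the regularity assumptions and write A = (A_1, A_2) with A_1 ∈ ℤ^{m×m} and det A_1 ≠ 0. Let v̄ = A_1·1̄ be the sum of the first m columns of A, let 1̂ ∈ ℤ^n be the vector whose first m coordinates are 1 and whose last n−m coordinates are 0, and let L_A^⊥ = {z ∈ ℤ^n : A z = 0}. Then for every integer s ≥ 1, ⌈g_s(A, v̄)⌉ ≥ μ_s(P(A, v̄) − 1̂, L_A^⊥) − 1 − c(A_1, A). -/

import Mathlib

open scoped BigOperators
open Matrix

noncomputable section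

/-- The real matrix obtained from an integer matrix. -/
def Rmat {m n : ℕ} (A : Matrix (Fin m) (Fin n) ℤ) : Matrix (Fin m) (Fin n) ℝ :=
  A.map (Int.cast : ℤ → ℝ)

/-- The real vector obtained from an integer vector. -/
def Rvec {m : ℕ} (b : Fin m → ℤ) : Fin m → ℝ := fun i => (b i : ℝ)

/-- The knapsack polytope P(A,b) = {x ≥ 0 : A x = b}. -/
def knap {m n : ℕ} (A : Matrix (Fin m) (Fin n) ℤ) (b : Fin m → ℝ) : Set (Fin n → ℝ) :=
  {x | (∀ i, 0 ≤ x i) ∧ (Rmat A).mulVec x = b}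

/-- The set F_s(A) of integer vectors b for which P(A,b) contains at least s integer points. -/
def feas {m n : ℕ} (s : ℕ) (A : Matrix (Fin m) (Fin n) ℤ) : Set (Fin m → ℤ) :=
  {b | s ≤ Set.ncard {x : Fin n → ℤ | (∀ i, 0 ≤ x i) ∧ A.mulVec x = b}}

/-- The cone generated by the columns of A. -/
def coneOf {m n : ℕ} (A : Matrix (Fin m) (Fin n) ℤ) : Set (Fin m → ℝ) :=
  {y | ∃ x : Fin n → ℝ, (∀ i, 0 ≤ x i) ∧ (Rmat A).mulVec x = y}

/-- The generalized diagonal s-Frobenius number g_s(A, w). -/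
def gDiag {m n : ℕ} (s : ℕ) (A : Matrix (Fin m) (Fin n) ℤ) (w : Fin m → ℝ) : ℝ :=
  sInf {t : ℝ | 0 ≤ t ∧
    ∀ b : Fin m → ℤ, Rvec b ∈ interior ((fun c => t • w + c) '' coneOf A) → b ∈ feas s A}

/-- v = A·1 is the sum of the columns of A (as a real vector). -/
def vA {m n : ℕ} (A : Matrix (Fin m) (Fin n) ℤ) : Fin m → ℝ :=
  (Rmat A).mulVec (fun _ => 1)

/-- The diagonal s-Frobenius number g_s(A) = g_s(A, A·1). -/
def gFrob {m n : ℕ} (s : ℕ) (A : Matrix (Fin m) (Fin n) ℤ) : ℝ := gDiag s A (vA A)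

/-- The regularity assumptions: the m×m minors of A have gcd 1, and the only
nonnegative real solution of A x = 0 is x = 0. -/
def regular {m n : ℕ} (A : Matrix (Fin m) (Fin n) ℤ) : Prop :=
  Finset.univ.gcd (fun I : Fin m ↪ Fin n => (A.submatrix id ⇑I).det) = 1 ∧
  ∀ x : Fin n → ℝ, (∀ i, 0 ≤ x i) → (Rmat A).mulVec x = 0 → x = 0

/-- The s-covering radius of K with respect to L: the smallest μ > 0 such that every
point of the real span of L lies in y + μK for at least s distinct y ∈ L. -/
def muCov {N : ℕ} (s : ℕ) (K L : Set (Fin N → ℝ)) : ℝ :=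
  sInf {μ : ℝ | 0 < μ ∧ ∀ x ∈ Submodule.span ℝ L,
    ∃ T : Finset (Fin N → ℝ), ↑T ⊆ L ∧ s ≤ T.card ∧ ∀ y ∈ T, ∃ k ∈ K, x = y + μ • k}

/-- The set of absolute values of m×m minors of A. -/
def minorAbs {m n : ℕ} (A : Matrix (Fin m) (Fin n) ℤ) : Set ℤ :=
  {d | ∃ I : Fin m ↪ Fin n, d = |(A.submatrix id ⇑I).det|}

/-- m(A): the minimal absolute m×m minor of A. -/
def mMin {m n : ℕ} (A : Matrix (Fin m) (Fin n) ℤ) : ℤ := sInf (minorAbs A)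

/-- M(A): the maximal absolute m×m minor of A. -/
def mMax {m n : ℕ} (A : Matrix (Fin m) (Fin n) ℤ) : ℤ := sSup (minorAbs A)

/-- The lattice L_A^⊥ = {z ∈ ℤ^n : A z = 0}, viewed as a subset of ℝ^n. -/
def kerLat {m n : ℕ} (A : Matrix (Fin m) (Fin n) ℤ) : Set (Fin n → ℝ) :=
  {x | ∃ z : Fin n → ℤ, A.mulVec z = 0 ∧ x = Rvec z}

/-- √(det (A Aᵀ)). -/
def sqrtDet {m n : ℕ} (A : Matrix (Fin m) (Fin n) ℤ) : ℝ :=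
  Real.sqrt (((A * Aᵀ).det : ℤ) : ℝ)

/-- The s-Frobenius number of a positive primitive integer vector. -/
def sFrob {n : ℕ} (s : ℕ) (a : Fin n → ℤ) : ℤ :=
  sSup {b : ℤ | Set.ncard {x : Fin n → ℤ | (∀ i, 0 ≤ x i) ∧ ∑ i, a i * x i = b} < s}

/-- The full-rank lattice in ℝ^d with basis the columns of an invertible matrix B. -/
def latSet {d : ℕ} (B : Matrix (Fin d) (Fin d) ℝ) : Set (Fin d → ℝ) :=
  {x | ∃ z : Fin d → ℤ, x = B.mulVec (fun i => (z i : ℝ))}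

/-- The absolute s-inhomogeneous minimum ϑ_s(K) = inf_L μ_s(K,L)/det(L)^{1/d}. -/
def theta (s d : ℕ) (K : Set (Fin d → ℝ)) : ℝ :=
  sInf {r : ℝ | ∃ B : Matrix (Fin d) (Fin d) ℝ, B.det ≠ 0 ∧
    r = muCov s K (latSet B) / |B.det| ^ ((1 : ℝ) / d)}

/-- The standard simplex S_d ⊂ ℝ^d. -/
def stdSimplex' (d : ℕ) : Set (Fin d → ℝ) :=
  {x | (∀ i, 0 ≤ x i) ∧ ∑ i, x i ≤ 1}

/-!
Write `A = (A₁, A₂)`, `B = A₁⁻¹A₂` and `K = P(A, v̄) − 1̂`. Let `t` be admissible for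
`g_s(A, v̄)` and let `x = (x₁, x₂)` be real with `Ax = 0`. Pushing the rounding error
`x₂ − ⌊x₂⌋ ∈ [0, 1)^{n−m}` through `B` moves `x₁` by at most `c` in each coordinate, so there is an
integer `q ≤ x₁ + t + 1 + c` for which `w = (q, ⌊x₂⌋)` has `Aw` in the interior of `t v̄ + C`.
Each of the `s` nonnegative integer solutions `u` of `Az = Aw` gives the lattice point
`w − u ∈ L_A^⊥`, and `x ∈ w − u + (t + 1 + c)K`; hence `μ_s ≤ t + 1 + c`. Conversely an admissible
`μ` for `μ_s` is admissible for `g_s`: subtracting the `s` covering lattice points from one integer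
solution of `Az = b` gives `s` nonnegative ones. So either `μ_s = 0`, or both infima range over
nonempty sets and `μ_s ≤ g_s + 1 + c`.
-/

lemma Rmat_mulVec_Rvec {m n : ℕ} (A : Matrix (Fin m) (Fin n) ℤ) (z : Fin n → ℤ) :
    Rmat A *ᵥ Rvec z = Rvec (A *ᵥ z) := by
  funext i; simp [Rmat, Rvec, Matrix.mulVec, dotProduct]

lemma Rvec_injective {n : ℕ} : Function.Injective (Rvec : (Fin n → ℤ) → Fin n → ℝ) :=
  fun _ _ h => funext fun j => Int.cast_injective (congrFun h j)

@[simp]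
lemma Rvec_zero {n : ℕ} : Rvec (0 : Fin n → ℤ) = 0 := by
  funext j; simp [Rvec]

lemma Rvec_sub {n : ℕ} (u v : Fin n → ℤ) : Rvec (u - v) = Rvec u - Rvec v := by
  funext j; simp [Rvec]

lemma det_Rmat {m : ℕ} (A : Matrix (Fin m) (Fin m) ℤ) : (Rmat A).det = A.det := by
  simpa [Rmat, RingHom.mapMatrix_apply] using (RingHom.map_det (Int.castRingHom ℝ) A).symm

lemma isUnit_Rmat {m : ℕ} {A : Matrix (Fin m) (Fin m) ℤ} (hA : A.det ≠ 0) : IsUnit (Rmat A) := by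
  rw [Matrix.isUnit_iff_isUnit_det, det_Rmat, isUnit_iff_ne_zero]
  exact_mod_cast hA

lemma det_submatrix_smul_mem_range {m n : ℕ} (A : Matrix (Fin m) (Fin n) ℤ) (I : Fin m ↪ Fin n)
    (b : Fin m → ℤ) : (A.submatrix id I).det • b ∈ LinearMap.range A.mulVecLin := by
  classical
  set v := (A.submatrix id I).adjugate *ᵥ b
  refine ⟨fun j => ∑ i, if I i = j then v i else 0, funext fun r => ?_⟩
  have hsel : A.mulVecLin (fun j => ∑ i, if I i = j then v i else 0) r
      = (A.submatrix id I *ᵥ v) r := by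
    simp only [Matrix.mulVecLin_apply, Matrix.mulVec, dotProduct, Finset.mul_sum, mul_ite,
      mul_zero, Matrix.submatrix_apply, id]
    rw [Finset.sum_comm]
    simp
  rw [hsel, Matrix.mulVec_mulVec, Matrix.mul_adjugate, Matrix.smul_mulVec, Matrix.one_mulVec]

lemma exists_mulVec_eq_of_gcd_minors_eq_one {m n : ℕ} (A : Matrix (Fin m) (Fin n) ℤ)
    (hgcd : Finset.univ.gcd (fun I : Fin m ↪ Fin n => (A.submatrix id I).det) = 1)
    (b : Fin m → ℤ) : ∃ u : Fin n → ℤ, A *ᵥ u = b := by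
  obtain ⟨g, hg⟩ := Finset.gcd_eq_sum_mul Finset.univ fun I : Fin m ↪ Fin n =>
    (A.submatrix id I).det
  have hb : b = ∑ I, g I • (A.submatrix id I).det • b := by
    conv_lhs => rw [← one_smul ℤ b, ← hgcd, hg, Finset.sum_smul]
    simp only [smul_smul, mul_comm]
  show b ∈ LinearMap.range A.mulVecLin
  rw [hb]
  exact Submodule.sum_mem _ fun I _ => Submodule.smul_mem _ _ (det_submatrix_smul_mem_range A I b)

lemma Rvec_rowSum {m n : ℕ} (M : Matrix (Fin m) (Fin n) ℤ) :
    Rvec (fun i => ∑ j, M i j) = Rmat M *ᵥ 1 := by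
  funext i; simp [Rvec, Rmat, Matrix.mulVec, dotProduct]

lemma exists_functional_gt_on_cols {m n : ℕ} (A : Matrix (Fin m) (Fin n) ℤ)
    (hpointed : ∀ x : Fin n → ℝ, (∀ i, 0 ≤ x i) → Rmat A *ᵥ x = 0 → x = 0) :
    ∃ f : (Fin m → ℝ) →L[ℝ] ℝ, ∃ v : ℝ, 0 < v ∧ ∀ j, v < f ((Rmat A).col j) := by
  set K := (Rmat A *ᵥ ·) '' stdSimplex ℝ (Fin n)
  have hconv : Convex ℝ K := (convex_stdSimplex ℝ (Fin n)).linear_image (Rmat A).mulVecLin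
  have hcpt : IsCompact K :=
    (isCompact_stdSimplex ℝ (Fin n)).image (Continuous.matrix_mulVec continuous_const continuous_id)
  have h0 : (0 : Fin m → ℝ) ∉ K := by
    rintro ⟨x, ⟨hx0, hx1⟩, hx⟩
    simp [hpointed x hx0 hx] at hx1
  obtain ⟨f, v, hv, hfK⟩ := geometric_hahn_banach_point_closed hconv hcpt.isClosed h0
  refine ⟨f, v, by simpa using hv, fun j => hfK _ ⟨_, single_mem_stdSimplex ℝ j, ?_⟩⟩
  simp [Matrix.mulVec_single]

lemma finite_nonneg_solutions {m n : ℕ} (A : Matrix (Fin m) (Fin n) ℤ)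
    (hpointed : ∀ x : Fin n → ℝ, (∀ i, 0 ≤ x i) → Rmat A *ᵥ x = 0 → x = 0) (b : Fin m → ℤ) :
    {x : Fin n → ℤ | (∀ i, 0 ≤ x i) ∧ A *ᵥ x = b}.Finite := by
  obtain ⟨f, v, hv, hf⟩ := exists_functional_gt_on_cols A hpointed
  refine (Set.finite_Icc 0 fun _ => ⌈f (Rvec b) / v⌉).subset fun x ⟨hx0, hxb⟩ => ⟨hx0, fun j => ?_⟩
  have hx0' (i : Fin n) : (0 : ℝ) ≤ x i := by exact_mod_cast hx0 i
  have hsum : f (Rvec b) = ∑ i, (x i : ℝ) * f ((Rmat A).col i) := by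
    rw [← hxb, ← Rmat_mulVec_Rvec, ← Finset.univ_sum_single (Rvec x)]
    simp [Matrix.mulVec_sum, Matrix.mulVec_single, Rvec, mul_comm]
  have hxj : (x j : ℝ) * v ≤ f (Rvec b) := by
    rw [hsum]
    calc (x j : ℝ) * v ≤ (x j : ℝ) * f ((Rmat A).col j) :=
          mul_le_mul_of_nonneg_left (hf j).le (hx0' j)
      _ ≤ _ := Finset.single_le_sum (f := fun i => (x i : ℝ) * f ((Rmat A).col i))
          (fun i _ => mul_nonneg (hx0' i) (hv.trans (hf i)).le) (Finset.mem_univ j)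
  exact_mod_cast ((le_div_iff₀ hv).mpr hxj).trans (Int.le_ceil _)

lemma sInf_le_sInf_add_of_subset {S T : Set ℝ} {a : ℝ} (ha : 0 ≤ a) (hS : ∀ x ∈ S, 0 ≤ x)
    (hT : ∀ x ∈ T, 0 ≤ x) (hST : S ⊆ T) (hTS : ∀ t ∈ T, t + a ∈ S) :
    sInf S ≤ sInf T + a := by
  rcases S.eq_empty_or_nonempty with rfl | ⟨x, hx⟩
  · rw [Real.sInf_empty]
    linarith [Real.sInf_nonneg hT]
  · have hbdd : BddBelow S := ⟨0, hS⟩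
    have : sInf S - a ≤ sInf T :=
      le_csInf ⟨x, hST hx⟩ fun t ht => by linarith [csInf_le hbdd (hTS t ht)]
    linarith

open scoped Pointwise in
lemma mem_interior_add_image_iff {E : Type*} [AddCommGroup E] [TopologicalSpace E]
    [IsTopologicalAddGroup E] (w y : E) (C : Set E) :
    y ∈ interior ((w + ·) '' C) ↔ y - w ∈ interior C := by
  rw [show ((w + ·) '' C) = w +ᵥ C from Set.image_vadd (a := w), interior_vadd,
    Set.mem_vadd_set_iff_neg_vadd_mem, vadd_eq_add, neg_add_eq_sub]

lemma Set.exists_finset_subset_card_eq {α : Type*} {S : Set α} {s : ℕ} (hs : s ≤ S.ncard) :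
    ∃ U : Finset α, ↑U ⊆ S ∧ U.card = s := by
  obtain ⟨U, hUS, hU⟩ := Set.exists_subset_card_eq hs
  rcases Nat.eq_zero_or_pos s with rfl | hpos
  · exact ⟨∅, by simp, rfl⟩
  · obtain ⟨U', rfl⟩ := (Set.finite_of_ncard_pos (hU ▸ hpos)).exists_finset_coe
    exact ⟨U', hUS, by rwa [Set.ncard_coe_finset] at hU⟩

lemma mulVec_apply_le_sum_max_zero {ι κ : Type*} [Fintype κ] (B : Matrix ι κ ℝ) {δ : κ → ℝ}
    (hδ0 : 0 ≤ δ) (hδ1 : δ ≤ 1) (i : ι) : (B *ᵥ δ) i ≤ ∑ j, max (B i j) 0 :=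
  Finset.sum_le_sum fun j _ =>
    calc B i j * δ j ≤ max (B i j) 0 * δ j := mul_le_mul_of_nonneg_right (le_max_left _ _) (hδ0 j)
      _ ≤ max (B i j) 0 := mul_le_of_le_one_right (le_max_right _ _) (hδ1 j)

lemma le_sSup_of_exists_eq {ι : Type*} [Finite ι] (f : ι → ℝ) (i : ι) :
    f i ≤ sSup {x | ∃ i, x = f i} :=
  le_csSup ((Set.finite_range f).subset (by rintro _ ⟨j, rfl⟩; exact ⟨j, rfl⟩)).bddAbove ⟨i, rfl⟩

section Blocks

variable {R : Type*} {m k : ℕ}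

def leftCols (A : Matrix (Fin m) (Fin (m + k)) R) : Matrix (Fin m) (Fin m) R :=
  A.submatrix id (Fin.castAdd k)

def rightCols (A : Matrix (Fin m) (Fin (m + k)) R) : Matrix (Fin m) (Fin k) R :=
  A.submatrix id (Fin.natAdd m)

lemma mulVec_append [NonUnitalNonAssocSemiring R] (A : Matrix (Fin m) (Fin (m + k)) R)
    (y : Fin m → R) (z : Fin k → R) :
    A *ᵥ Fin.append y z = leftCols A *ᵥ y + rightCols A *ᵥ z := by
  funext i
  simp [leftCols, rightCols, Matrix.mulVec, dotProduct, Fin.sum_univ_add]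

lemma mulVec_eq_leftCols_add_rightCols [NonUnitalNonAssocSemiring R]
    (A : Matrix (Fin m) (Fin (m + k)) R) (x : Fin (m + k) → R) :
    A *ᵥ x = leftCols A *ᵥ (x ∘ Fin.castAdd k) + rightCols A *ᵥ (x ∘ Fin.natAdd m) := by
  conv_lhs => rw [← Fin.append_castAdd_natAdd (f := x)]
  exact mulVec_append A _ _

lemma leftCols_Rmat (A : Matrix (Fin m) (Fin (m + k)) ℤ) : leftCols (Rmat A) = Rmat (leftCols A) :=
  rfl

lemma rightCols_Rmat (A : Matrix (Fin m) (Fin (m + k)) ℤ) :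
    rightCols (Rmat A) = Rmat (rightCols A) :=
  rfl

end Blocks

def CoversWith {N : ℕ} (s : ℕ) (K L : Set (Fin N → ℝ)) (μ : ℝ) : Prop :=
  ∀ x ∈ Submodule.span ℝ L,
    ∃ T : Finset (Fin N → ℝ), ↑T ⊆ L ∧ s ≤ T.card ∧ ∀ y ∈ T, ∃ k ∈ K, x = y + μ • k

lemma muCov_eq_sInf {N : ℕ} (s : ℕ) (K L : Set (Fin N → ℝ)) :
    muCov s K L = sInf {μ | 0 < μ ∧ CoversWith s K L μ} :=
  rfl

def FeasibleBeyond {m n : ℕ} (s : ℕ) (A : Matrix (Fin m) (Fin n) ℤ) (w : Fin m → ℝ) (t : ℝ) :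
    Prop :=
  ∀ b : Fin m → ℤ, Rvec b ∈ interior ((fun c => t • w + c) '' coneOf A) → b ∈ feas s A

lemma gDiag_eq_sInf {m n : ℕ} (s : ℕ) (A : Matrix (Fin m) (Fin n) ℤ) (w : Fin m → ℝ) :
    gDiag s A w = sInf {t | 0 ≤ t ∧ FeasibleBeyond s A w t} :=
  rfl

lemma mulVec_eq_zero_of_mem_span_kerLat {m n : ℕ} (A : Matrix (Fin m) (Fin n) ℤ)
    {x : Fin n → ℝ} (hx : x ∈ Submodule.span ℝ (kerLat A)) : Rmat A *ᵥ x = 0 := by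
  have hsub : kerLat A ⊆ LinearMap.ker (Rmat A).mulVecLin := by
    rintro _ ⟨z, hz, rfl⟩
    simp [Rmat_mulVec_Rvec, hz]
  exact Submodule.span_le.mpr hsub hx

lemma sub_mem_image_knap_of_le {m n : ℕ} (A : Matrix (Fin m) (Fin n) ℤ) (h : Fin n → ℝ)
    {x : Fin n → ℝ} (hx : Rmat A *ᵥ x = 0) {μ : ℝ} (hμ : 0 < μ) {u w : Fin n → ℤ} (hu : 0 ≤ u)
    (huw : A *ᵥ u = A *ᵥ w) (hw : Rvec w ≤ x + μ • h) :
    ∃ k ∈ (· - h) '' knap A (Rmat A *ᵥ h), x = Rvec (w - u) + μ • k := by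
  set p := μ⁻¹ • (x - Rvec (w - u)) + h
  have hpk : p - h = μ⁻¹ • (x - Rvec (w - u)) := add_sub_cancel_right _ _
  refine ⟨_, ⟨p, ⟨fun j => ?_, ?_⟩, rfl⟩, ?_⟩
  · have hwj := hw j
    have huj : (0 : ℝ) ≤ u j := by exact_mod_cast hu j
    simp only [Pi.add_apply, Pi.smul_apply, smul_eq_mul] at hwj
    simp only [p, Rvec_sub, Pi.add_apply, Pi.smul_apply, Pi.sub_apply, smul_eq_mul]
    have : 0 ≤ μ⁻¹ * (x j - (Rvec w j - Rvec u j) + μ * h j) :=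
      mul_nonneg (inv_nonneg.mpr hμ.le) (by simp only [Rvec] at hwj ⊢; linarith)
    rwa [mul_add, ← mul_assoc, inv_mul_cancel₀ hμ.ne', one_mul] at this
  · rw [Matrix.mulVec_add, Matrix.mulVec_smul, Matrix.mulVec_sub, hx, Rmat_mulVec_Rvec,
      Matrix.mulVec_sub, huw, sub_self]
    simp
  · show x = Rvec (w - u) + μ • (p - h)
    rw [hpk, smul_smul, mul_inv_cancel₀ hμ.ne', one_smul, add_sub_cancel]

section Split

variable {m k : ℕ} (A : Matrix (Fin m) (Fin (m + k)) ℤ)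

def oneHat (m k : ℕ) : Fin (m + k) → ℝ := Fin.append 1 0

lemma oneHat_eq_ite : (fun j : Fin (m + k) => if (j : ℕ) < m then (1 : ℝ) else 0) = oneHat m k := by
  funext j
  refine Fin.addCases (fun i => ?_) (fun i => ?_) j <;> simp [oneHat]

lemma Rmat_mulVec_oneHat : Rmat A *ᵥ oneHat m k = Rmat (leftCols A) *ᵥ 1 := by
  rw [oneHat, mulVec_append, Matrix.mulVec_zero, add_zero, leftCols_Rmat]

lemma mulVec_mem_interior_coneOf (hdet : (leftCols A).det ≠ 0) {q : Fin m → ℝ}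
    (hq : ∀ i, 0 < q i) : Rmat (leftCols A) *ᵥ q ∈ interior (coneOf A) := by
  have hunit := (Matrix.isUnit_iff_isUnit_det _).mp (isUnit_Rmat hdet)
  set U := (fun y => (Rmat (leftCols A))⁻¹ *ᵥ y) ⁻¹' Set.univ.pi fun _ => Set.Ioi 0
  have hopen : IsOpen U :=
    (isOpen_set_pi Set.finite_univ fun _ _ => isOpen_Ioi).preimage
      (Continuous.matrix_mulVec continuous_const continuous_id)
  have hUC : U ⊆ coneOf A := fun y hy =>
    ⟨Fin.append ((Rmat (leftCols A))⁻¹ *ᵥ y) 0,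
      fun j => Fin.addCases (fun i => by simpa using (hy i trivial).le) (fun i => by simp) j,
      by rw [mulVec_append, Matrix.mulVec_zero, add_zero, leftCols_Rmat, Matrix.mulVec_mulVec,
        Matrix.mul_nonsing_inv _ hunit, Matrix.one_mulVec]⟩
  refine interior_maximal hUC hopen ?_
  show (Rmat (leftCols A))⁻¹ *ᵥ (Rmat (leftCols A) *ᵥ q) ∈ Set.univ.pi _
  rw [Matrix.mulVec_mulVec, Matrix.nonsing_inv_mul _ hunit, Matrix.one_mulVec]
  exact fun i _ => hq i

lemma eq_of_mulVec_eq_of_comp_natAdd_eq (hdet : (leftCols A).det ≠ 0) {x y : Fin (m + k) → ℝ}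
    (hxy : Rmat A *ᵥ x = Rmat A *ᵥ y) (h2 : x ∘ Fin.natAdd m = y ∘ Fin.natAdd m) : x = y := by
  rw [mulVec_eq_leftCols_add_rightCols (Rmat A) x, mulVec_eq_leftCols_add_rightCols (Rmat A) y,
    h2, add_left_inj, leftCols_Rmat] at hxy
  have h1 := Matrix.mulVec_injective_iff_isUnit.mpr (isUnit_Rmat hdet) hxy
  rw [← Fin.append_castAdd_natAdd (f := x), ← Fin.append_castAdd_natAdd (f := y)]
  exact congrArg₂ Fin.append h1 h2

def kerVec (j : Fin k) : Fin (m + k) → ℤ :=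
  Fin.append (-((leftCols A).adjugate * rightCols A) *ᵥ Pi.single j 1)
    (Pi.single j (leftCols A).det)

lemma mulVec_kerVec (j : Fin k) : A *ᵥ kerVec A j = 0 := by
  rw [kerVec, mulVec_append, Matrix.mulVec_mulVec, Matrix.mul_neg, ← Matrix.mul_assoc,
    Matrix.mul_adjugate, Matrix.smul_mul, Matrix.one_mul, Matrix.neg_mulVec,
    Matrix.smul_mulVec, ← Matrix.mulVec_smul, ← Pi.single_smul', smul_eq_mul, mul_one,
    neg_add_cancel]

lemma mem_span_kerLat (hdet : (leftCols A).det ≠ 0) {x : Fin (m + k) → ℝ}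
    (hx : Rmat A *ᵥ x = 0) : x ∈ Submodule.span ℝ (kerLat A) := by
  set d : ℝ := ((leftCols A).det : ℝ)
  have hd : d ≠ 0 := Int.cast_ne_zero.mpr hdet
  have hy : ∑ j, (x (Fin.natAdd m j) / d) • Rvec (kerVec A j) ∈ Submodule.span ℝ (kerLat A) :=
    Submodule.sum_mem _ fun j _ =>
      Submodule.smul_mem _ _ (Submodule.subset_span ⟨kerVec A j, mulVec_kerVec A j, rfl⟩)
  convert hy using 1
  refine eq_of_mulVec_eq_of_comp_natAdd_eq A hdet ?_ ?_
  · rw [hx, mulVec_eq_zero_of_mem_span_kerLat A hy]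
  · funext j
    simp [kerVec, Rvec, Finset.sum_apply, Pi.single_apply, d, hd]

lemma Rvec_append (q : Fin m → ℤ) (z : Fin k → ℤ) :
    Rvec (Fin.append q z) = Fin.append (Rvec q) (Rvec z) := by
  funext j
  refine Fin.addCases (fun i => ?_) (fun i => ?_) j <;> simp [Rvec]

lemma exists_int_near_of_mulVec_eq_zero (hdet : (leftCols A).det ≠ 0) {x : Fin (m + k) → ℝ}
    (hx : Rmat A *ᵥ x = 0) {t c : ℝ}
    (hc : ∀ i, ∑ j, max (((Rmat (leftCols A))⁻¹ * Rmat (rightCols A)) i j) 0 ≤ c) :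
    ∃ w : Fin (m + k) → ℤ, Rvec (A *ᵥ w) - t • (Rmat A *ᵥ oneHat m k) ∈ interior (coneOf A) ∧
      Rvec w ≤ x + (t + 1 + c) • oneHat m k := by
  set A₁ := Rmat (leftCols A)
  set A₂ := Rmat (rightCols A)
  set x₁ := x ∘ Fin.castAdd k
  set x₂ := x ∘ Fin.natAdd m
  set z : Fin k → ℤ := fun j => ⌊x₂ j⌋
  set e := (A₁⁻¹ * A₂) *ᵥ (x₂ - Rvec z)
  set q : Fin m → ℤ := fun i => ⌊x₁ i + e i + t⌋ + 1
  have he (i : Fin m) : e i ≤ c :=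
    (mulVec_apply_le_sum_max_zero _ (fun j => sub_nonneg.2 (Int.floor_le _))
      (fun j => (sub_lt_iff_lt_add'.2 (Int.lt_floor_add_one _)).le) i).trans (hc i)
  refine ⟨Fin.append q z, ?_, fun j => Fin.addCases (fun i => ?_) (fun i => ?_) j⟩
  · have hunit : IsUnit A₁.det := (Matrix.isUnit_iff_isUnit_det _).mp (isUnit_Rmat hdet)
    have hker : A₁ *ᵥ x₁ = -(A₂ *ᵥ x₂) := by
      rw [mulVec_eq_leftCols_add_rightCols] at hx
      exact eq_neg_of_add_eq_zero_left hx
    have hA₁e : A₁ *ᵥ e = A₂ *ᵥ (x₂ - Rvec z) := by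
      rw [Matrix.mulVec_mulVec, Matrix.mul_nonsing_inv_cancel_left _ _ hunit]
    have hb : Rvec (A *ᵥ Fin.append q z) - t • (Rmat A *ᵥ oneHat m k)
        = A₁ *ᵥ (Rvec q - x₁ - e - t • 1) := by
      rw [← Rmat_mulVec_Rvec, Rvec_append, mulVec_append, Rmat_mulVec_oneHat, Matrix.mulVec_sub,
        Matrix.mulVec_sub, Matrix.mulVec_sub, Matrix.mulVec_smul, hker, hA₁e, Matrix.mulVec_sub]
      simp only [leftCols_Rmat, rightCols_Rmat, A₁, A₂]
      abel
    rw [hb]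
    refine mulVec_mem_interior_coneOf A hdet fun i => ?_
    simp only [Pi.sub_apply, Pi.smul_apply, Pi.one_apply, smul_eq_mul, mul_one, q, Rvec]
    push_cast
    linarith [Int.lt_floor_add_one (x₁ i + e i + t)]
  · simp only [Fin.append_left, oneHat, Pi.add_apply, Pi.smul_apply, Pi.one_apply,
      smul_eq_mul, mul_one, q, Rvec]
    push_cast
    linarith [Int.floor_le (x₁ i + e i + t), he i, show x₁ i = x (Fin.castAdd k i) from rfl]
  · simp only [Fin.append_right, oneHat, Pi.add_apply, Pi.smul_apply,
      Pi.zero_apply, smul_eq_mul, mul_zero, add_zero, z, Rvec]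
    exact Int.floor_le _

lemma coversWith_of_feasibleBeyond (hdet : (leftCols A).det ≠ 0) {s : ℕ} {t c : ℝ}
    (ht : 0 ≤ t) (hc0 : 0 ≤ c)
    (hc : ∀ i, ∑ j, max (((Rmat (leftCols A))⁻¹ * Rmat (rightCols A)) i j) 0 ≤ c)
    (hfeas : FeasibleBeyond s A (Rmat A *ᵥ oneHat m k) t) :
    CoversWith s ((· - oneHat m k) '' knap A (Rmat A *ᵥ oneHat m k)) (kerLat A) (t + 1 + c) := by
  intro x hx
  have hx0 := mulVec_eq_zero_of_mem_span_kerLat A hx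
  obtain ⟨w, hwC, hwx⟩ := exists_int_near_of_mulVec_eq_zero A hdet hx0 (t := t) hc
  have hb : A *ᵥ w ∈ feas s A := hfeas _ ((mem_interior_add_image_iff _ _ _).2 hwC)
  obtain ⟨U, hUsol, hUcard⟩ := Set.exists_finset_subset_card_eq hb
  have hinj : Set.InjOn (fun u => Rvec (w - u)) U := fun u _ v _ h =>
    sub_right_injective (Rvec_injective h)
  refine ⟨U.image fun u => Rvec (w - u), ?_, ?_, ?_⟩
  · intro y hy
    obtain ⟨u, hu, rfl⟩ := Finset.mem_image.1 hy
    exact ⟨w - u, by rw [Matrix.mulVec_sub, (hUsol hu).2, sub_self], rfl⟩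
  · rw [Finset.card_image_of_injOn hinj, hUcard]
  · intro y hy
    obtain ⟨u, hu, rfl⟩ := Finset.mem_image.1 hy
    exact sub_mem_image_knap_of_le A _ hx0 (by positivity) (hUsol hu).1 (hUsol hu).2 hwx

lemma feasibleBeyond_of_coversWith (hA : regular A) (hdet : (leftCols A).det ≠ 0) {s : ℕ} {μ : ℝ}
    (hμ : 0 ≤ μ)
    (hcov : CoversWith s ((· - oneHat m k) '' knap A (Rmat A *ᵥ oneHat m k)) (kerLat A) μ) :
    FeasibleBeyond s A (Rmat A *ᵥ oneHat m k) μ := by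
  intro b hb
  obtain ⟨xw, hxw0, hxwA⟩ := interior_subset ((mem_interior_add_image_iff _ _ _).1 hb)
  obtain ⟨u₀, hu₀⟩ := exists_mulVec_eq_of_gcd_minors_eq_one A hA.1 b
  set x := Rvec u₀ - xw - μ • oneHat m k
  have hx : Rmat A *ᵥ x = 0 := by
    rw [Matrix.mulVec_sub, Matrix.mulVec_sub, Matrix.mulVec_smul, Rmat_mulVec_Rvec, hu₀, hxwA]
    abel
  obtain ⟨T, hTL, hTcard, hTK⟩ := hcov x (mem_span_kerLat A hdet hx)
  set sols := {u : Fin (m + k) → ℤ | (∀ i, 0 ≤ u i) ∧ A *ᵥ u = b}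
  have hsols : (Rvec u₀ - ·) '' ↑T ⊆ Rvec '' sols := by
    rintro _ ⟨y, hy, rfl⟩
    obtain ⟨z, hz, rfl⟩ := hTL hy
    obtain ⟨_, ⟨p, ⟨hp0, -⟩, rfl⟩, hxy⟩ := hTK _ hy
    refine ⟨u₀ - z, ⟨fun j => ?_, by rw [Matrix.mulVec_sub, hu₀, hz, sub_zero]⟩, Rvec_sub _ _⟩
    have hj := congrFun hxy j
    simp only [x, Rvec, Pi.sub_apply, Pi.add_apply, Pi.smul_apply, smul_eq_mul, mul_sub] at hj
    have : (0 : ℝ) ≤ ((u₀ - z) j : ℤ) := by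
      rw [Pi.sub_apply, Int.cast_sub]
      linarith [hxw0 j, mul_nonneg hμ (hp0 j)]
    exact_mod_cast this
  calc s ≤ T.card := hTcard
    _ = ((Rvec u₀ - ·) '' ↑T).ncard := by
      rw [Set.ncard_image_of_injective _ sub_right_injective, Set.ncard_coe_finset]
    _ ≤ (Rvec '' sols).ncard :=
      Set.ncard_le_ncard hsols ((finite_nonneg_solutions A hA.2 b).image _)
    _ = sols.ncard := Set.ncard_image_of_injective _ Rvec_injective

end Split

theorem stmt_7_general {m k : ℕ} (s : ℕ)
    (A : Matrix (Fin m) (Fin (m + k)) ℤ) (hA : regular A)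
    (A1 : Matrix (Fin m) (Fin m) ℤ) (hA1 : A1 = Matrix.of fun i j => A i (Fin.castAdd k j))
    (A2 : Matrix (Fin m) (Fin k) ℤ) (hA2 : A2 = Matrix.of fun i j => A i (Fin.natAdd m j))
    (hdet : A1.det ≠ 0)
    (c : ℝ) (hc : c = sSup {x : ℝ | ∃ i : Fin m,
      x = ∑ j : Fin k,
        max (((A1.map (Int.cast : ℤ → ℝ))⁻¹ * A2.map (Int.cast : ℤ → ℝ)) i j) 0})
    (vbar : Fin m → ℤ) (hvbar : vbar = fun i => ∑ j : Fin m, A1 i j)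
    (onehat : Fin (m + k) → ℝ) (honehat : onehat = fun j : Fin (m + k) => if (j : ℕ) < m then (1 : ℝ) else 0) :
    (⌈gDiag s A (Rvec vbar)⌉ : ℝ) ≥
      muCov s ((fun x => x - onehat) '' knap A (Rvec vbar)) (kerLat A) - 1 - c := by
  obtain rfl : A1 = leftCols A := hA1
  obtain rfl : A2 = rightCols A := hA2
  have hrow (i : Fin m) :
      ∑ j, max (((Rmat (leftCols A))⁻¹ * Rmat (rightCols A)) i j) 0 ≤ c := by
    rw [hc]
    exact le_sSup_of_exists_eq
      (fun i => ∑ j, max (((Rmat (leftCols A))⁻¹ * Rmat (rightCols A)) i j) 0) i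
  have hc0 : 0 ≤ c := hc ▸ Real.sSup_nonneg (by
    rintro _ ⟨i, rfl⟩
    exact Finset.sum_nonneg fun _ _ => le_max_right _ _)
  rw [hvbar, Rvec_rowSum, ← Rmat_mulVec_oneHat, honehat, oneHat_eq_ite, muCov_eq_sInf,
    gDiag_eq_sInf, ge_iff_le, sub_sub, sub_le_iff_le_add]
  refine (add_le_add_left (Int.le_ceil _) _).trans' (sInf_le_sInf_add_of_subset (by linarith)
    (fun _ h => h.1.le) (fun _ h => h.1)
    (fun _ ⟨hμ, hcov⟩ => ⟨hμ.le, feasibleBeyond_of_coversWith A hA hdet hμ.le hcov⟩)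
    (fun t ⟨ht, hfeas⟩ => ⟨by linarith, ?_⟩))
  rw [← add_assoc]
  exact coversWith_of_feasibleBeyond A hdet ht hc0 hrow hfeas

/-- Lower bound on ⌈g_s(A, v̄)⌉ via the s-covering radius (Lemma 2).
Here n = m + k, A = (A₁, A₂) with A₁ the first m columns. -/
theorem stmt_7 {m k : ℕ} (hm : 1 ≤ m) (hk : 1 ≤ k) (s : ℕ) (hs : 1 ≤ s)
    (A : Matrix (Fin m) (Fin (m + k)) ℤ) (hA : regular A)
    (A1 : Matrix (Fin m) (Fin m) ℤ) (hA1 : A1 = Matrix.of fun i j => A i (Fin.castAdd k j))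
    (A2 : Matrix (Fin m) (Fin k) ℤ) (hA2 : A2 = Matrix.of fun i j => A i (Fin.natAdd m j))
    (hdet : A1.det ≠ 0)
    (c : ℝ) (hc : c = sSup {x : ℝ | ∃ i : Fin m,
      x = ∑ j : Fin k,
        max (((A1.map (Int.cast : ℤ → ℝ))⁻¹ * A2.map (Int.cast : ℤ → ℝ)) i j) 0})
    (vbar : Fin m → ℤ) (hvbar : vbar = fun i => ∑ j : Fin m, A1 i j)
    (onehat : Fin (m + k) → ℝ) (honehat : onehat = fun j : Fin (m + k) => if (j : ℕ) < m then (1 : ℝ) else 0) :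
    (⌈gDiag s A (Rvec vbar)⌉ : ℝ) ≥
      muCov s ((fun x => x - onehat) '' knap A (Rvec vbar)) (kerLat A) - 1 - c :=
  stmt_7_general s A hA A1 hA1 A2 hA2 hdet c hc vbar hvbar onehat honehat

end
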